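/- arXiv:1210.6294 — 2 statements merged into one kernel-verified Lean document; each statement's English description precedes it below -/
import Mathlib

section
/- Let X:[0,T]→ℝ^d be continuously differentiable. Define 𝐗_{st} ∈ ℋ* for s,t ∈ [0,T] recursively by ⟨𝐗_{st},1⟩ = 1, ⟨𝐗_{st},•_i⟩ = X^i_t − X^i_s, ⟨𝐗_{st},[τ₁⋯τₙ]_i⟩ = ∫_s^t ⟨𝐗_{sr},τ₁⟩⋯⟨𝐗_{sr},τₙ⟩ dX^i_r (a Riemann–Stieltjes integral), extended multiplicatively to forests: ⟨𝐗_{st},τ₁⋯τₙ⟩ = ⟨𝐗_{st},τ₁⟩⋯⟨𝐗_{st},τₙ⟩. Then Chen's property holds: for all s,u,t ∈ [0,T] and every forest h, ⟨𝐗_{st},h⟩ = Σ_{(h)} ⟨𝐗_{su},h⁽¹⁾⟩⟨𝐗_{ut},h⁽²⁾⟩, where Δh = Σ_{(h)} h⁽¹⁾⊗h⁽²⁾. -/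
open scoped TensorProduct
open scoped Classical

noncomputable section

/-! ### Labelled rooted trees with unordered branches

`TreeData A` axiomatizes the set `𝒯` of nonempty rooted trees with finitely many
vertices, each vertex labelled from the alphabet `A`, with unordered branches:
`attach m a = [τ₁ ⋯ τₘ]_a` attaches the forest (multiset of trees) `m` to a new
root labelled `a`, and every tree arises uniquely in this way; `size τ = |τ|` is
the number of vertices.  These conditions pin the structure down uniquely. -/
structure TreeData (A : Type) : Type 1 where
  T : Type
  size : T → ℕ
  size_pos : ∀ τ, 0 < size τ
  attach : (T →₀ ℕ) → A → T
  attach_bijective : Function.Bijective fun p : (T →₀ ℕ) × A => attach p.1 p.2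
  size_attach : ∀ m a, size (attach m a) = 1 + m.sum fun τ k => k * size τ

namespace TreeData

variable {A : Type} (TD : TreeData A)

/-- the single-vertex tree `•_a` -/
def leaf (a : A) : TD.T := TD.attach 0 a

/-- The Connes–Kreimer Hopf algebra `ℋ`: the free commutative polynomial
`ℝ`-algebra on the trees, with linear basis the forests (monomials). -/
abbrev H : Type := MvPolynomial TD.T ℝ

/-- the grade `|τ₁ ⋯ τₙ| = |τ₁| + ⋯ + |τₙ|` of a forest -/
def grade (m : TD.T →₀ ℕ) : ℕ := m.sum fun τ k => k * TD.size τ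

/-- the basis monomial of `ℋ` corresponding to a forest -/
def mono (m : TD.T →₀ ℕ) : TD.H := MvPolynomial.monomial m (1 : ℝ)

/-- the grafting operator `B₊_a`, sending a forest `τ₁ ⋯ τₘ` to `[τ₁ ⋯ τₘ]_a` -/
def Bplus (a : A) : TD.H →ₗ[ℝ] TD.H :=
  (MvPolynomial.basisMonomials TD.T ℝ).constr ℝ fun m =>
    TD.mono (Finsupp.single (TD.attach m a) 1)

/-- `ℋ*`, the full linear dual of `ℋ`: formal series in the dual basis of forests -/
abbrev Dual : Type := (TD.T →₀ ℕ) → ℝ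

/-- the pairing `⟨f, h⟩` of `f ∈ ℋ*` with `h ∈ ℋ` -/
def pairL (f : TD.Dual) : TD.H →ₗ[ℝ] ℝ :=
  (MvPolynomial.basisMonomials TD.T ℝ).constr ℝ f

/-- the dual basis element of `ℋ*` corresponding to a forest -/
def dualForest (m : TD.T →₀ ℕ) : TD.Dual := fun m' => if m' = m then 1 else 0

/-- the counit `1* ∈ ℋ*` -/
def unitD : TD.Dual := fun m => if m = 0 then 1 else 0

/-- the subspace `ℋ_n ⊆ ℋ` spanned by the forests of grade at most `n` -/
def Hn (n : ℕ) : Submodule ℝ TD.H :=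
  Submodule.span ℝ {p : TD.H | ∃ m : TD.T →₀ ℕ, TD.grade m ≤ n ∧ p = TD.mono m}

/-- `g` is a character of `ℋ_N` (an element of the truncated group `G_N(ℋ)`):
`⟨g,1⟩ = 1` and `⟨g, h₁h₂⟩ = ⟨g,h₁⟩⟨g,h₂⟩` whenever `|h₁| + |h₂| ≤ N`. -/
def IsCharN (N : ℕ) (g : TD.Dual) : Prop :=
  g 0 = 1 ∧ (∀ m, ¬TD.grade m ≤ N → g m = 0) ∧
    ∀ m₁ m₂, TD.grade m₁ + TD.grade m₂ ≤ N → g (m₁ + m₂) = g m₁ * g m₂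

/-- `h ∈ ℋ*` is a `δ`-primitive: `δh = 1 ⊗ h + h ⊗ 1`, i.e.
`⟨h, xy⟩ = ⟨1, x⟩⟨h, y⟩ + ⟨h, x⟩⟨1, y⟩` for all `x, y ∈ ℋ`. -/
def IsPrim (f : TD.Dual) : Prop :=
  ∀ p q : TD.H, TD.pairL f (p * q) =
    TD.pairL TD.unitD p * TD.pairL f q + TD.pairL f p * TD.pairL TD.unitD q

/-- `g ∈ ℋ*` is group-like: `δg = g ⊗ g`, i.e. `⟨g, xy⟩ = ⟨g, x⟩⟨g, y⟩`. -/
def IsGroupLike (g : TD.Dual) : Prop :=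
  ∀ p q : TD.H, TD.pairL g (p * q) = TD.pairL g p * TD.pairL g q

/-- the linear tree with root labelled `a` and the labels of `l` going up the chain -/
def chainUp : A → List A → TD.T
  | a, [] => TD.leaf a
  | a, b :: l => TD.attach (Finsupp.single (chainUp b l) 1) a

/-- the inclusion `ι : T(ℝᵈ) → ℋ` on basis words: the word `i₁ ⋯ i_k` is sent to the
(forest consisting of the) linear tree with `i₁` at the top down to `i_k` at the root -/
def iotaForest (w : List A) : TD.T →₀ ℕ :=
  match w.reverse with
  | [] => 0
  | a :: l => Finsupp.single (TD.chainUp a l) 1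

/-- `F` is the family of elementary differentials (Butcher coefficients) `f_τ`
associated to the vector fields `f_a`: `f_{[τ₁⋯τₙ]_a} = Dⁿf_a : (f_{τ₁},…,f_{τₙ})`. -/
def IsElemDiff (e : ℕ) (f : A → (Fin e → ℝ) → Fin e → ℝ)
    (F : TD.T → (Fin e → ℝ) → Fin e → ℝ) : Prop :=
  ∀ (m : TD.T →₀ ℕ) (a : A) (y : Fin e → ℝ) (α : Fin e),
    F (TD.attach m a) y α =
      iteratedFDeriv ℝ m.toMultiset.toList.length (fun x => f a x α) y
        (fun j => F (m.toMultiset.toList.get j) y)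

/-- `f_h` on the forest basis: `f_1 = Id`, `f_τ = F τ` on trees, and `f` vanishes on
nontrivial forest products. -/
def forestElem {e : ℕ} (F : TD.T → (Fin e → ℝ) → Fin e → ℝ)
    (m : TD.T →₀ ℕ) (y : Fin e → ℝ) (α : Fin e) : ℝ :=
  if m = 0 then y α
  else if h : ∃ τ : TD.T, m = Finsupp.single τ 1 then F h.choose y α else 0

end TreeData

/-- The Connes–Kreimer coproduct: the algebra morphism `Δ : ℋ → ℋ ⊗ ℋ` determined
recursively by `Δ1 = 1 ⊗ 1` and
`Δ[τ₁⋯τₘ]_a = [τ₁⋯τₘ]_a ⊗ 1 + Σ (τ₁⁽¹⁾⋯τₘ⁽¹⁾) ⊗ [τ₁⁽²⁾⋯τₘ⁽²⁾]_a`,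
i.e. by the cocycle property `Δ ∘ B₊_a = B₊_a ⊗ 1 + (id ⊗ B₊_a) ∘ Δ`. -/
structure CKCoproduct {A : Type} (TD : TreeData A) where
  Δ : TD.H →ₐ[ℝ] TD.H ⊗[ℝ] TD.H
  Δ_Bplus : ∀ (a : A) (p : TD.H),
    Δ (TD.Bplus a p) = TD.Bplus a p ⊗ₜ[ℝ] 1 + LinearMap.lTensor TD.H (TD.Bplus a) (Δ p)

namespace CKCoproduct

variable {A : Type} {TD : TreeData A} (CK : CKCoproduct TD)

/-- the convolution product on `ℋ*`: `⟨f ⋆ g, h⟩ = ⟨f ⊗ g, Δh⟩` -/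
def conv (f g : TD.Dual) : TD.Dual := fun m =>
  LinearMap.mul' ℝ ℝ (TensorProduct.map (TD.pairL f) (TD.pairL g) (CK.Δ (TD.mono m)))

/-- the convolution product, truncated beyond grade `N` -/
def convN (N : ℕ) (f g : TD.Dual) : TD.Dual := fun m =>
  if TD.grade m ≤ N then CK.conv f g m else 0

/-- truncated convolution powers -/
def convNPow (N : ℕ) (f : TD.Dual) (k : ℕ) : TD.Dual :=
  Nat.rec TD.unitD (fun _ ih => CK.convN N f ih) k

/-- the `⋆`-inverse in the truncated character group `G_N(ℋ)` -/
def starInv (N : ℕ) (g : TD.Dual) : TD.Dual := fun m =>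
  ∑ k ∈ Finset.range (N + 1), (-1 : ℝ) ^ k * CK.convNPow N (g - TD.unitD) k m

/-- the truncated `⋆`-logarithm `log⋆(1+x) = Σ_{k≥1} (−1)^{k−1} x^{⋆k}/k` -/
def logStar (N : ℕ) (g : TD.Dual) : TD.Dual := fun m =>
  ∑ k ∈ Finset.Icc 1 N, ((-1 : ℝ) ^ (k + 1) / k) * CK.convNPow N (g - TD.unitD) k m

/-- untruncated convolution powers -/
def convPow (f : TD.Dual) (k : ℕ) : TD.Dual :=
  Nat.rec TD.unitD (fun _ ih => CK.conv f ih) k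

/-- the `⋆`-exponential `exp⋆(h) = Σ_{k≥0} h^{⋆k}/k!` -/
def expStar (f : TD.Dual) : TD.Dual := fun m => ∑' k : ℕ, (Nat.factorial k : ℝ)⁻¹ * CK.convPow f k m

/-- the increments `𝐗_{st} = 𝐗_s⁻¹ ⋆ 𝐗_t` of a path in `G_N(ℋ)` -/
def inc (N : ℕ) (X : ℝ → TD.Dual) (s t : ℝ) : TD.Dual :=
  CK.convN N (CK.starInv N (X s)) (X t)

/-- a `γ`-Hölder branched rough path on `[0,T]`: a path in `G_N(ℋ)` with
`sup_{s≠t} |⟨𝐗_{st},τ⟩|/|t−s|^{γ|τ|} < ∞` for every forest `τ` of grade `≤ N`. -/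
def IsBRP (γ : ℝ) (N : ℕ) (Tf : ℝ) (X : ℝ → TD.Dual) : Prop :=
  (∀ t ∈ Set.Icc (0 : ℝ) Tf, TD.IsCharN N (X t)) ∧
    ∀ m : TD.T →₀ ℕ, TD.grade m ≤ N →
      ∃ C : ℝ, ∀ s ∈ Set.Icc (0 : ℝ) Tf, ∀ t ∈ Set.Icc (0 : ℝ) Tf,
        |CK.inc N X s t m| ≤ C * |t - s| ^ (γ * (TD.grade m : ℝ))

end CKCoproduct

/-! ### Words: the tensor algebra over a set of letters, with shuffle and
(de)concatenation structure.  An element of `T(V)` (or a functional on it) is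
represented by its family of coefficients on basis words. -/
namespace Words

variable {ι : Type}

/-- the empty word `1` (as a dual/coefficient family) -/
def unitW : List ι → ℝ := fun w => if w = [] then 1 else 0

/-- the basis element corresponding to a single word -/
def deltaW (w : List ι) : List ι → ℝ := fun w' => if w' = w then 1 else 0

/-- the multiset of shuffles (interleavings) of two words -/
def Shuf : List ι → List ι → Multiset (List ι)
  | [], l => {l}
  | a :: as, [] => {a :: as}
  | a :: as, b :: bs =>
      ((Shuf as (b :: bs)).map fun w => a :: w) + ((Shuf (a :: as) bs).map fun w => b :: w)
  termination_by l₁ l₂ => l₁.length + l₂.length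

/-- the subword of `w` along a set of positions -/
def subIdx (w : List ι) (S : Finset (Fin w.length)) : List ι :=
  (S.sort (· ≤ ·)).map w.get

/-- the shuffle product `⧢` (in coefficients) -/
def shufW (x y : List ι → ℝ) : List ι → ℝ := fun w =>
  ∑ S : Finset (Fin w.length), x (subIdx w S) * y (subIdx w Sᶜ)

/-- the concatenation (tensor) product of functionals, truncated beyond `N` letters -/
def concatConvN (N : ℕ) (f g : List ι → ℝ) : List ι → ℝ := fun w =>
  if w.length ≤ N then ∑ k ∈ Finset.range (w.length + 1), f (w.take k) * g (w.drop k) else 0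

/-- truncated concatenation powers -/
def concatPow (N : ℕ) (f : List ι → ℝ) (k : ℕ) : List ι → ℝ :=
  Nat.rec unitW (fun _ ih => concatConvN N f ih) k

/-- the inverse in the truncated group: `g⁻¹ = Σ_k (−1)^k (g − 1)^{⊗k}` -/
def concatInv (N : ℕ) (g : List ι → ℝ) : List ι → ℝ := fun w =>
  ∑ k ∈ Finset.range (N + 1), (-1 : ℝ) ^ k * concatPow N (g - unitW) k w

/-- the truncated tensor exponential -/
def expW (N : ℕ) (x : List ι → ℝ) : List ι → ℝ := fun w =>
  ∑ k ∈ Finset.range (N + 1), (Nat.factorial k : ℝ)⁻¹ * concatPow N x k w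

/-- the truncated tensor logarithm -/
def logW (N : ℕ) (x : List ι → ℝ) : List ι → ℝ := fun w =>
  ∑ k ∈ Finset.Icc 1 N, ((-1 : ℝ) ^ (k + 1) / k) * concatPow N (x - unitW) k w

/-- a shuffle character truncated at `N` letters, with letters restricted by `P`:
an element of the step-`N` free nilpotent group `G^{(N)}` over the letters. -/
def IsShuffleCharN (N : ℕ) (P : ι → Prop) (g : List ι → ℝ) : Prop :=
  g [] = 1 ∧ (∀ w : List ι, ¬(w.length ≤ N ∧ ∀ σ ∈ w, P σ) → g w = 0) ∧
    ∀ u v : List ι, u.length + v.length ≤ N → ((Shuf u v).map g).sum = g u * g v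

/-- the increments `𝐗̄_{st} = 𝐗̄_s⁻¹ ⊗ 𝐗̄_t` of a path in `G^{(N)}` -/
def gInc (N : ℕ) (X : ℝ → List ι → ℝ) (s t : ℝ) : List ι → ℝ :=
  concatConvN N (concatInv N (X s)) (X t)

/-- a `γ`-Hölder geometric rough path on `[0,T]`: a path in the step-`N` free
nilpotent group with `|⟨𝐗̄_{st}, w⟩| ≤ C|t−s|^{γk}` for words of `k ≤ N` letters. -/
def IsGeomRP (γ : ℝ) (N : ℕ) (Tf : ℝ) (P : ι → Prop) (X : ℝ → List ι → ℝ) : Prop :=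
  (∀ t ∈ Set.Icc (0 : ℝ) Tf, IsShuffleCharN N P (X t)) ∧
    ∀ w : List ι, w.length ≤ N →
      ∃ C : ℝ, ∀ s ∈ Set.Icc (0 : ℝ) Tf, ∀ t ∈ Set.Icc (0 : ℝ) Tf,
        |gInc N X s t w| ≤ C * |t - s| ^ (γ * (w.length : ℝ))

/-- the projection of `T(ℬ)` onto `T(ℬ_n)` (kill words with a letter of size `> n`) -/
def projW {A : Type} (TD : TreeData A) (n : ℕ) (x : List TD.T → ℝ) : List TD.T → ℝ :=
  fun w => if ∀ σ ∈ w, TD.size σ ≤ n then x w else 0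

/-- the weight of a word of trees -/
def wt {A : Type} (TD : TreeData A) (w : List TD.T) : ℕ := (w.map TD.size).sum

/-- the commutator bracket with respect to truncated concatenation -/
def bracketW (N : ℕ) (x y : List ι → ℝ) : List ι → ℝ :=
  concatConvN N x y - concatConvN N y x

/-- the free (step-`N`) Lie algebra generated by the letters satisfying `P` -/
def freeLie (N : ℕ) (P : ι → Prop) : Submodule ℝ (List ι → ℝ) :=
  sInf {S : Submodule ℝ (List ι → ℝ) |
    (∀ a : ι, P a → deltaW [a] ∈ S) ∧ ∀ x ∈ S, ∀ y ∈ S, bracketW N x y ∈ S}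

/-- the Lie ideal of the free Lie algebra generated by a set `G` -/
def lieIdealGen (N : ℕ) (P : ι → Prop) (G : Set (List ι → ℝ)) : Submodule ℝ (List ι → ℝ) :=
  sInf {S : Submodule ℝ (List ι → ℝ) |
    G ⊆ ↑S ∧ ∀ x ∈ freeLie N P, ∀ y ∈ S, bracketW N x y ∈ S}

/-- the homogeneous norm `ρ(x) = Σ_k ‖ℓ_k‖^{1/k}` where `log x = Σ ℓ_k` is graded by
the number of tensor factors and `‖·‖` is the Euclidean norm -/
def rhoNorm (N : ℕ) (x : List ι → ℝ) : ℝ :=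
  ∑ k ∈ Finset.Icc 1 N,
    Real.sqrt (∑' w : {w : List ι // w.length = k}, logW N x w.1 ^ 2) ^ ((k : ℝ)⁻¹)

end Words

namespace TreeData

variable {A : Type} (TD : TreeData A)

/-- `φ` is the Hopf algebra morphism `φ_g : ℋ → T(ℝᵈ)` determined by `φ_g(1) = 1`,
`φ_g([h]_a) = φ_g(h) ⊗ e_a` and `φ_g(h₁h₂) = φ_g(h₁) ⧢ φ_g(h₂)`. -/
def IsPhiG (φ : TD.H →ₗ[ℝ] (List A → ℝ)) : Prop :=
  φ (1 : TD.H) = Words.unitW ∧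
  (∀ p : TD.H, (Function.support (φ p)).Finite) ∧
  (∀ (a : A) (p : TD.H),
      φ (TD.Bplus a p) = fun w => if w.getLast? = some a then φ p w.dropLast else 0) ∧
  (∀ p q : TD.H, φ (p * q) = Words.shufW (φ p) (φ q))

/-- the coefficient `⟨h, φ(𝐙)_s⟩` of the composition of a smooth function with a
controlled rough path, for a nonempty forest `h`:
`Σ_{h₁⋯hₙ = h} (1/n!) Dⁿφ(Z_s) : (⟨h₁,𝐙_s⟩, …, ⟨hₙ,𝐙_s⟩)`. -/
def compC {e : ℕ} (φ : (Fin e → ℝ) → Fin e → ℝ) (Zs : Fin e → TD.H)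
    (h : TD.T →₀ ℕ) (α : Fin e) : ℝ :=
  ∑' p : Σ n : ℕ, Fin n → (TD.T →₀ ℕ),
    if (∀ j, p.2 j ≠ 0) ∧ (∑ j, p.2 j) = h ∧ 0 < p.1 then
      (Nat.factorial p.1 : ℝ)⁻¹ *
        iteratedFDeriv ℝ p.1 (fun x => φ x α) (fun β => MvPolynomial.coeff 0 (Zs β))
          (fun j β => MvPolynomial.coeff (p.2 j) (Zs β))
    else 0

/-- the full composition coefficient, `⟨1, φ(𝐙)_s⟩ = φ(Z_s)` on the empty forest -/
def compFull {e : ℕ} (φ : (Fin e → ℝ) → Fin e → ℝ) (Zs : Fin e → TD.H)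
    (h : TD.T →₀ ℕ) (α : Fin e) : ℝ :=
  if h = 0 then φ (fun β => MvPolynomial.coeff 0 (Zs β)) α else TD.compC φ Zs h α

end TreeData

namespace CKCoproduct

variable {A : Type} {TD : TreeData A} (CK : CKCoproduct TD)

/-- `ψ : (ℋ,·,Δ) → (T(ℬ),⧢,Δ̄)` is a graded morphism of Hopf algebras such that for
every tree `τ` with `|τ| ≤ n`, `ψ(τ) = τ + ψ_{n−1}(τ)` (where `ψ_{n−1}` is `ψ`
composed with the projection onto `T(ℬ_{n−1})`). -/
def IsPsi (ψ : TD.H →ₗ[ℝ] (List TD.T → ℝ)) : Prop :=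
  ψ (1 : TD.H) = Words.unitW ∧
  (∀ p : TD.H, (Function.support (ψ p)).Finite) ∧
  (∀ (m : TD.T →₀ ℕ) (w : List TD.T), Words.wt TD w ≠ TD.grade m → ψ (TD.mono m) w = 0) ∧
  (∀ p q : TD.H, ψ (p * q) = Words.shufW (ψ p) (ψ q)) ∧
  (∀ (p : TD.H) (u v : List TD.T),
      ψ p (u ++ v) =
        LinearMap.mul' ℝ ℝ
          (TensorProduct.map
            ((LinearMap.proj (R := ℝ) (φ := fun _ : List TD.T => ℝ) u).comp ψ)
            ((LinearMap.proj (R := ℝ) (φ := fun _ : List TD.T => ℝ) v).comp ψ)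
            (CK.Δ p))) ∧
  (∀ (n : ℕ) (τ : TD.T), TD.size τ ≤ n →
      ∀ w : List TD.T, (∃ σ ∈ w, n ≤ TD.size σ) →
        ψ (TD.mono (Finsupp.single τ 1)) w = if w = [τ] then 1 else 0)

/-- an `𝐗`-controlled rough path with coefficients indexed by forests of grade `≤ M`:
`|⟨h,𝐙_t⟩ − ⟨𝐗_{st} ⋆ h, 𝐙_s⟩| ≤ C |t−s|^{(N−|h|)γ}`. -/
def IsControlled (γ : ℝ) (N M : ℕ) (Tf : ℝ) {e : ℕ}
    (Xinc : ℝ → ℝ → TD.Dual) (Z : ℝ → Fin e → TD.H) : Prop :=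
  (∀ t ∈ Set.Icc (0 : ℝ) Tf, ∀ α, ∀ m : TD.T →₀ ℕ, ¬TD.grade m ≤ M →
      MvPolynomial.coeff m (Z t α) = 0) ∧
    ∀ m : TD.T →₀ ℕ, TD.grade m ≤ M →
      ∃ C : ℝ, ∀ s ∈ Set.Icc (0 : ℝ) Tf, ∀ t ∈ Set.Icc (0 : ℝ) Tf, ∀ α,
        |MvPolynomial.coeff m (Z t α) -
            TD.pairL (CK.conv (Xinc s t) (TD.dualForest m)) (Z s α)| ≤
          C * |t - s| ^ (γ * ((N : ℝ) - (TD.grade m : ℝ)))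

/-- `Y` (together with the controlled rough path `𝐘 = Z` above it) solves the RDE
`dY_t = Σ_a f_a(Y_t) dX^a_t` driven by the rough path with increments `Xinc`, in the
sense of the controlled-rough-path fixed point `𝐘_t − 𝐘_s = ∫_s^t f(𝐘_r)·dX_r`,
the rough integral being defined via the sewing lemma from the local approximations
`Σ_{a} Σ_{h} ⟨h, f_a(𝐘)_s⟩ ⟨𝐗_{st}, [h]_a⟩`. -/
def IsRDESolution (γ : ℝ) (N M : ℕ) (Tf : ℝ) {e : ℕ}
    (Xinc : ℝ → ℝ → TD.Dual) (f : A → (Fin e → ℝ) → Fin e → ℝ)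
    (Y : ℝ → Fin e → ℝ) (Z : ℝ → Fin e → TD.H) : Prop :=
  CK.IsControlled γ N M Tf Xinc Z ∧
  (∀ t ∈ Set.Icc (0 : ℝ) Tf, ∀ α, MvPolynomial.coeff 0 (Z t α) = Y t α) ∧
  (∀ t ∈ Set.Icc (0 : ℝ) Tf, ∀ α, ∀ (h : TD.T →₀ ℕ) (a : A),
      TD.grade (Finsupp.single (TD.attach h a) 1) ≤ M →
      MvPolynomial.coeff (Finsupp.single (TD.attach h a) 1) (Z t α) =
        TD.compFull (f a) (Z t) h α) ∧
  (∀ t ∈ Set.Icc (0 : ℝ) Tf, ∀ α, ∀ m : TD.T →₀ ℕ, m ≠ 0 →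
      (¬∃ τ : TD.T, m = Finsupp.single τ 1) → MvPolynomial.coeff m (Z t α) = 0) ∧
  ∃ r : ℝ → ℝ → Fin e → ℝ,
    (∀ s ∈ Set.Icc (0 : ℝ) Tf, ∀ t ∈ Set.Icc (0 : ℝ) Tf, ∀ α,
      Y t α - Y s α =
        (∑' p : (TD.T →₀ ℕ) × A,
          if TD.grade p.1 ≤ N - 1 then
            TD.compFull (f p.2) (Z s) p.1 α *
              Xinc s t (Finsupp.single (TD.attach p.1 p.2) 1)
          else 0) + r s t α) ∧
    ∀ ε > (0 : ℝ), ∃ δ > (0 : ℝ), ∀ s ∈ Set.Icc (0 : ℝ) Tf, ∀ t ∈ Set.Icc (0 : ℝ) Tf,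
      |t - s| ≤ δ → ∀ α, |r s t α| ≤ ε * |t - s|

/-- the homogeneous norm `∥g∥ = Σ_{τ ∈ 𝒯_N} |⟨log⋆ g, τ⟩|^{1/|τ|}` on `G_N(ℋ)` -/
def hNorm (N : ℕ) (g : TD.Dual) : ℝ :=
  ∑' τ : TD.T,
    if TD.size τ ≤ N then |CK.logStar N g (Finsupp.single τ 1)| ^ ((TD.size τ : ℝ)⁻¹) else 0

end CKCoproduct

/-! Chen's relation is proved by induction on the grade of the forest `h`.  Both sides are
multiplicative in `h`, the right-hand side because `Δ` is an algebra morphism, so only trees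
`[h]_i` need an argument.  Splitting `∫_s^t = ∫_s^u + ∫_u^t`, the first piece is `⟨𝐗_{su},[h]_i⟩`,
and the induction hypothesis inside the second gives
`∫_u^t ⟨𝐗_{sr},h⟩ dX^i_r = Σ ⟨𝐗_{su},h⁽¹⁾⟩ ∫_u^t ⟨𝐗_{ur},h⁽²⁾⟩ dX^i_r`,
which is `Σ ⟨𝐗_{su},h⁽¹⁾⟩ ⟨𝐗_{ut},[h⁽²⁾]_i⟩`.
These are the two terms of `Δ[h]_i = [h]_i ⊗ 1 + (id ⊗ B₊_i) Δh`. -/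

namespace TreeData

variable {A : Type} {TD : TreeData A}

theorem basisMonomials_eq_mono (m : TD.T →₀ ℕ) :
    MvPolynomial.basisMonomials TD.T ℝ m = TD.mono m :=
  rfl

theorem mono_zero : TD.mono 0 = 1 :=
  rfl

theorem mono_add (m₁ m₂ : TD.T →₀ ℕ) : TD.mono (m₁ + m₂) = TD.mono m₁ * TD.mono m₂ := by
  simp only [mono, MvPolynomial.monomial_mul, mul_one]

theorem pairL_mono (f : TD.Dual) (m : TD.T →₀ ℕ) : TD.pairL f (TD.mono m) = f m :=
  (MvPolynomial.basisMonomials TD.T ℝ).constr_basis ℝ f m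

theorem pairL_one (f : TD.Dual) : TD.pairL f 1 = f 0 :=
  pairL_mono f 0

theorem pairL_apply (f : TD.Dual) (p : TD.H) :
    TD.pairL f p = ∑ m ∈ p.support, p.coeff m * f m := by
  conv_lhs => rw [p.as_sum]
  refine (map_sum _ _ _).trans (Finset.sum_congr rfl fun m _ => ?_)
  rw [← mul_one (p.coeff m), ← smul_eq_mul, ← MvPolynomial.smul_monomial, map_smul,
    ← mono, pairL_mono, smul_eq_mul, smul_eq_mul, mul_one]

theorem Bplus_mono (a : A) (m : TD.T →₀ ℕ) :
    TD.Bplus a (TD.mono m) = TD.mono (Finsupp.single (TD.attach m a) 1) :=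
  (MvPolynomial.basisMonomials TD.T ℝ).constr_basis ℝ _ m

theorem pairL_comp_Bplus (f : TD.Dual) (a : A) :
    TD.pairL f ∘ₗ TD.Bplus a = TD.pairL fun m => f (Finsupp.single (TD.attach m a) 1) :=
  (MvPolynomial.basisMonomials TD.T ℝ).ext fun m => by
    simp only [LinearMap.comp_apply, basisMonomials_eq_mono, Bplus_mono, pairL_mono]

theorem isGroupLike_of_map_add {f : TD.Dual} (hf : ∀ m₁ m₂, f (m₁ + m₂) = f m₁ * f m₂) :
    TD.IsGroupLike f := by
  intro p q
  have := LinearMap.ext_basis (B := (LinearMap.mul ℝ TD.H).compr₂ (TD.pairL f))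
    (B' := (LinearMap.mul ℝ ℝ).compl₁₂ (TD.pairL f) (TD.pairL f))
    (MvPolynomial.basisMonomials TD.T ℝ) (MvPolynomial.basisMonomials TD.T ℝ)
    fun m₁ m₂ => by simp [basisMonomials_eq_mono, ← mono_add, pairL_mono, hf]
  exact congrArg (fun B => B p q) this

theorem grade_add (m₁ m₂ : TD.T →₀ ℕ) : TD.grade (m₁ + m₂) = TD.grade m₁ + TD.grade m₂ :=
  Finsupp.sum_add_index' (fun _ => zero_mul _) fun _ _ _ => add_mul _ _ _

theorem grade_single_attach (m : TD.T →₀ ℕ) (a : A) :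
    TD.grade (Finsupp.single (TD.attach m a) 1) = TD.grade m + 1 := by
  rw [grade, Finsupp.sum_single_index (zero_mul _), one_mul, TD.size_attach, add_comm]
  rfl

theorem grade_pos {m : TD.T →₀ ℕ} (hm : m ≠ 0) : 0 < TD.grade m := by
  obtain ⟨τ, hτ⟩ := Finsupp.support_nonempty_iff.mpr hm
  exact Finset.sum_pos' (fun _ _ => Nat.zero_le _)
    ⟨τ, hτ, Nat.mul_pos (Nat.pos_of_ne_zero (Finsupp.mem_support_iff.mp hτ)) (TD.size_pos τ)⟩

theorem forest_induction {P : (TD.T →₀ ℕ) → Prop} (zero : P 0)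
    (graft : ∀ m a, P m → P (Finsupp.single (TD.attach m a) 1))
    (add : ∀ m₁ m₂, P m₁ → P m₂ → P (m₁ + m₂)) (m : TD.T →₀ ℕ) : P m := by
  induction hn : TD.grade m using Nat.strong_induction_on generalizing m with
  | _ n ih =>
    rcases eq_or_ne m 0 with rfl | hm
    · exact zero
    obtain ⟨τ, hτ⟩ := Finsupp.support_nonempty_iff.mpr hm
    have hsplit : m = Finsupp.single τ 1 + (m - Finsupp.single τ 1) :=
      (add_tsub_cancel_of_le (Finsupp.single_le_iff.mpr
        (Nat.one_le_iff_ne_zero.mpr (Finsupp.mem_support_iff.mp hτ)))).symm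
    have hgrade := congrArg TD.grade hsplit
    rw [grade_add] at hgrade
    rcases eq_or_ne (m - Finsupp.single τ 1) 0 with hrest | hrest
    · obtain ⟨⟨m', a⟩, hτ⟩ := TD.attach_bijective.2 τ
      change TD.attach m' a = τ at hτ
      subst hτ
      rw [hrest, add_zero] at hsplit
      rw [hrest, grade_single_attach] at hgrade
      rw [hsplit]
      exact graft m' a (ih _ (by omega) m' rfl)
    · have h₁ := grade_pos (Finsupp.single_ne_zero.mpr one_ne_zero : Finsupp.single τ 1 ≠ 0)
      have h₂ := grade_pos hrest
      rw [hsplit]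
      exact add _ _ (ih _ (by omega) _ rfl) (ih _ (by omega) _ rfl)

theorem intervalIntegral_pairL_mul {G : ℝ → TD.Dual} {φ : ℝ → ℝ} {a b : ℝ}
    (hG : ∀ m, IntervalIntegrable (fun r => G r m * φ r) MeasureTheory.volume a b) (p : TD.H) :
    ∫ r in a..b, TD.pairL (G r) p * φ r = TD.pairL (fun m => ∫ r in a..b, G r m * φ r) p := by
  simp only [pairL_apply, Finset.sum_mul, mul_assoc]
  rw [intervalIntegral.integral_finsetSum fun m _ => (hG m).const_mul _]
  simp only [intervalIntegral.integral_const_mul]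

end TreeData

theorem LinearMap.mul'_map_mul {R S M N : Type*} [CommSemiring R] [CommSemiring S] [Algebra R S]
    [Semiring M] [Algebra R M] [Semiring N] [Algebra R N] {F : M →ₗ[R] S} {G : N →ₗ[R] S}
    (hF : ∀ p q, F (p * q) = F p * F q) (hG : ∀ p q, G (p * q) = G p * G q) (x y : M ⊗[R] N) :
    LinearMap.mul' R S (TensorProduct.map F G (x * y)) =
      LinearMap.mul' R S (TensorProduct.map F G x) *
        LinearMap.mul' R S (TensorProduct.map F G y) := by
  induction x using TensorProduct.induction_on with
  | zero => simp
  | add x₁ x₂ h₁ h₂ => simp only [add_mul, map_add, h₁, h₂]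
  | tmul a b =>
    induction y using TensorProduct.induction_on with
    | zero => simp
    | add y₁ y₂ h₁ h₂ => simp only [mul_add, map_add, h₁, h₂]
    | tmul c e =>
      simp only [Algebra.TensorProduct.tmul_mul_tmul, TensorProduct.map_tmul,
        LinearMap.mul'_apply, hF, hG]
      ring

namespace CKCoproduct

variable {A : Type} {TD : TreeData A} (CK : CKCoproduct TD)

theorem conv_zero {f g : TD.Dual} (hf : f 0 = 1) (hg : g 0 = 1) : CK.conv f g 0 = 1 := by
  rw [conv, TreeData.mono_zero, map_one, Algebra.TensorProduct.one_def, TensorProduct.map_tmul,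
    LinearMap.mul'_apply, TreeData.pairL_one, TreeData.pairL_one, hf, hg, mul_one]

theorem conv_add {f g : TD.Dual} (hf : TD.IsGroupLike f) (hg : TD.IsGroupLike g)
    (m₁ m₂ : TD.T →₀ ℕ) : CK.conv f g (m₁ + m₂) = CK.conv f g m₁ * CK.conv f g m₂ := by
  rw [conv, TreeData.mono_add, map_mul, LinearMap.mul'_map_mul hf hg]
  rfl

/-- `⟨f ⋆ g, h⟩ = ⟨g, (f ⊗ id) Δh⟩`: for fixed `f` and `h` this is a finite linear combination
of values of `g`, so it commutes with integrals in `g`. -/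
theorem conv_eq_pairL (f g : TD.Dual) (m : TD.T →₀ ℕ) :
    CK.conv f g m =
      TD.pairL g
        (TensorProduct.lid ℝ TD.H (LinearMap.rTensor TD.H (TD.pairL f) (CK.Δ (TD.mono m)))) := by
  rw [conv]
  induction CK.Δ (TD.mono m) using TensorProduct.induction_on with
  | zero => simp
  | add x y hx hy => simp only [map_add, hx, hy]
  | tmul p q => simp [LinearMap.mul'_apply]

theorem conv_single_attach (f g : TD.Dual) (m : TD.T →₀ ℕ) (a : A) :
    CK.conv f g (Finsupp.single (TD.attach m a) 1) =
      f (Finsupp.single (TD.attach m a) 1) * g 0 +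
        CK.conv f (fun m' => g (Finsupp.single (TD.attach m' a) 1)) m := by
  rw [conv, ← TreeData.Bplus_mono, CK.Δ_Bplus, map_add, map_add, TensorProduct.map_tmul,
    LinearMap.mul'_apply, LinearMap.map_lTensor, TreeData.pairL_comp_Bplus,
    TreeData.Bplus_mono, TreeData.pairL_mono, TreeData.pairL_one]
  rfl

end CKCoproduct

section IntegralRecursion

variable {A : Type} {TD : TreeData A} {BX : ℝ → ℝ → TD.Dual} {dX : A → ℝ → ℝ}
  (hdX : ∀ a, Continuous (dX a))
  (hone : ∀ s t, BX s t 0 = 1)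
  (hmul : ∀ s t m₁ m₂, BX s t (m₁ + m₂) = BX s t m₁ * BX s t m₂)
  (hint : ∀ s t m a, BX s t (Finsupp.single (TD.attach m a) 1) = ∫ r in s..t, BX s r m * dX a r)
include hdX hone hmul hint

theorem TreeData.continuous_of_integral_recursion (s : ℝ) (m : TD.T →₀ ℕ) :
    Continuous fun t => BX s t m := by
  induction m using TreeData.forest_induction generalizing s with
  | zero => simp only [hone, continuous_const]
  | graft m a ih =>
    simp only [hint]
    exact intervalIntegral.continuous_primitive
      (fun _ _ => ((ih s).mul (hdX a)).intervalIntegrable _ _) s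
  | add m₁ m₂ ih₁ ih₂ => simp only [hmul]; exact (ih₁ s).mul (ih₂ s)

theorem CKCoproduct.conv_of_integral_recursion (CK : CKCoproduct TD) (s u t : ℝ) (m : TD.T →₀ ℕ) :
    BX s t m = CK.conv (BX s u) (BX u t) m := by
  induction m using TreeData.forest_induction generalizing t with
  | zero => rw [hone, CK.conv_zero (hone s u) (hone u t)]
  | graft m a ih =>
    have hii (v : ℝ) (m' : TD.T →₀ ℕ) (x y : ℝ) :
        IntervalIntegrable (fun r => BX v r m' * dX a r) MeasureTheory.volume x y :=
      ((TreeData.continuous_of_integral_recursion hdX hone hmul hint v m').mul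
        (hdX a)).intervalIntegrable x y
    rw [CK.conv_single_attach, hone, mul_one, CK.conv_eq_pairL]
    calc BX s t (Finsupp.single (TD.attach m a) 1)
        = BX s u (Finsupp.single (TD.attach m a) 1) + ∫ r in u..t, BX s r m * dX a r := by
          rw [hint, hint,
            intervalIntegral.integral_add_adjacent_intervals (hii s m s u) (hii s m u t)]
      _ = _ := by
          simp only [ih, CK.conv_eq_pairL (BX s u)]
          rw [TreeData.intervalIntegral_pairL_mul fun m' => hii u m' u t]
          simp only [hint]
  | add m₁ m₂ ih₁ ih₂ =>
    rw [hmul, CK.conv_add (TreeData.isGroupLike_of_map_add (hmul s u))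
      (TreeData.isGroupLike_of_map_add (hmul u t)), ih₁, ih₂]

end IntegralRecursion

theorem stmt_3_general {d : ℕ} (TD : TreeData (Fin d)) (CK : CKCoproduct TD)
    (T : ℝ) (X : ℝ → Fin d → ℝ) (hX : ContDiff ℝ 1 X)
    (BX : ℝ → ℝ → TD.Dual)
    (hone : ∀ s t : ℝ, BX s t 0 = 1)
    (hmul : ∀ (s t : ℝ) (m₁ m₂ : TD.T →₀ ℕ), BX s t (m₁ + m₂) = BX s t m₁ * BX s t m₂)
    (hint : ∀ (s t : ℝ) (m : TD.T →₀ ℕ) (i : Fin d),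
      BX s t (Finsupp.single (TD.attach m i) 1) =
        ∫ r in s..t, BX s r m * deriv (fun u => X u i) r) :
    ∀ s ∈ Set.Icc (0 : ℝ) T, ∀ u ∈ Set.Icc (0 : ℝ) T, ∀ t ∈ Set.Icc (0 : ℝ) T,
      ∀ m : TD.T →₀ ℕ, BX s t m = CK.conv (BX s u) (BX u t) m := by
  have hdX : ∀ i : Fin d, Continuous (deriv fun r => X r i) :=
    fun i => (contDiff_pi.mp hX i).continuous_deriv le_rfl
  exact fun s _ u _ t _ m => CK.conv_of_integral_recursion hdX hone hmul hint s u t m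

theorem stmt_3 {d : ℕ} (hd : 1 ≤ d) (TD : TreeData (Fin d)) (CK : CKCoproduct TD)
    (T : ℝ) (hT : 0 < T) (X : ℝ → Fin d → ℝ) (hX : ContDiff ℝ 1 X)
    (BX : ℝ → ℝ → TD.Dual)
    (hone : ∀ s t : ℝ, BX s t 0 = 1)
    (hmul : ∀ (s t : ℝ) (m₁ m₂ : TD.T →₀ ℕ), BX s t (m₁ + m₂) = BX s t m₁ * BX s t m₂)
    (hint : ∀ (s t : ℝ) (m : TD.T →₀ ℕ) (i : Fin d),
      BX s t (Finsupp.single (TD.attach m i) 1) =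
        ∫ r in s..t, BX s r m * deriv (fun u => X u i) r) :
    ∀ s ∈ Set.Icc (0 : ℝ) T, ∀ u ∈ Set.Icc (0 : ℝ) T, ∀ t ∈ Set.Icc (0 : ℝ) T,
      ∀ m : TD.T →₀ ℕ, BX s t m = CK.conv (BX s u) (BX u t) m :=
  stmt_3_general TD CK T X hX BX hone hmul hint
end
end

section
/- Sewing lemma: let T > 0 and let Z̃:[0,T]×[0,T]→ℝ satisfy |Z̃_{st} − Z̃_{su} − Z̃_{ut}| ≤ C|t−u|^p|u−s|^q for all s,u,t ∈ [0,T], for constants C ≥ 0 and p,q > 0 with p+q > 1. Then there exists a function Y:[0,T]→ℝ, unique up to an additive constant, such that the remainder r_{st} := (Y_t − Y_s) − Z̃_{st} satisfies |r_{st}|/|t−s| → 0 as |t−s| → 0 (and r is the unique choice of remainder with this property making Z̃ + r the increment of a path). Moreover, for any s < t, Y_t − Y_s = lim Σ_{[u,v]∈𝒫} Z̃_{uv} along any sequence of partitions 𝒫 of [s,t] whose mesh tends to 0. -/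
/-!
Inserting a point `w` into a subinterval `[a, b]` of a partition changes the Riemann sum by
`Z a w + Z w b - Z a b`, which the defect bound controls by `C (b - a)^(p+q)`. Comparing two
partitions of mesh `h` with their union thus bounds the difference of their Riemann sums by
`(#P + #Q) C h^(p+q)`. For the dyadic partitions into `2^n` pieces this is `O(2^(n(1-p-q)))`, so,
as `p + q > 1`, their Riemann sums converge geometrically to some `I s t` with
`|I s t - Z s t| ≤ K (t - s)^(p+q)`, and the same comparison applied to the union of the dyadic
partitions of `[r, s]` and `[s, t]` gives `I r s + I s t = I r t`. Hence `Y t = I 0 t` has a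
remainder of order `|t - s|^(p+q) = o(|t - s|)`. Two such paths differ by a function with zero
derivative on `[0, T]`, and the Riemann sums of `Z` along a partition telescope against `Y` up to a
sum of remainders `o(|v - u|)`.
-/

open Finset Filter Topology

theorem Fin.sum_succ_sub_castSucc {M : Type*} [AddCommGroup M] {n : ℕ} (f : Fin (n + 1) → M) :
    ∑ i : Fin n, (f i.succ - f i.castSucc) = f (Fin.last n) - f 0 := by
  rw [sum_sub_distrib, sub_eq_sub_iff_add_eq_add, add_comm, ← Fin.sum_univ_succ,
    Fin.sum_univ_castSucc, add_comm]

namespace Sewing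

/-- The subintervals of the partition with point set `S`: pairs of consecutive points. -/
noncomputable def gaps (S : Finset ℝ) : Finset (ℝ × ℝ) :=
  (S ×ˢ S).filter fun g => g.1 < g.2 ∧ ∀ z ∈ S, z ≤ g.1 ∨ g.2 ≤ z

noncomputable def riemannSum (Z : ℝ → ℝ → ℝ) (S : Finset ℝ) : ℝ :=
  ∑ g ∈ gaps S, Z g.1 g.2

def IsPartition (S : Finset ℝ) (s t : ℝ) : Prop :=
  s ∈ S ∧ t ∈ S ∧ ∀ x ∈ S, x ∈ Set.Icc s t

def MeshLE (S : Finset ℝ) (h : ℝ) : Prop :=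
  ∀ g ∈ gaps S, g.2 - g.1 ≤ h

variable {S P Q W : Finset ℝ} {a b h r s t w x y : ℝ}

theorem mk_mem_gaps :
    (x, y) ∈ gaps S ↔ x ∈ S ∧ y ∈ S ∧ x < y ∧ ∀ z ∈ S, z ≤ x ∨ y ≤ z := by
  simp [gaps, and_assoc]

theorem notMem_of_mem_gaps (hab : (a, b) ∈ gaps S) (haw : a < w) (hwb : w < b) : w ∉ S :=
  fun hw => by rcases (mk_mem_gaps.1 hab).2.2.2 w hw with h | h <;> linarith

theorem gaps_insert (hab : (a, b) ∈ gaps S) (haw : a < w) (hwb : w < b) :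
    gaps (insert w S) = insert (a, w) (insert (w, b) ((gaps S).erase (a, b))) := by
  rw [mk_mem_gaps] at hab
  obtain ⟨ha, hb, -, hgap⟩ := hab
  ext ⟨x, y⟩
  simp only [mk_mem_gaps, Finset.mem_insert, mem_erase, forall_eq_or_imp, Prod.mk.injEq, ne_eq]
  grind

theorem riemannSum_insert (Z : ℝ → ℝ → ℝ) (hab : (a, b) ∈ gaps S) (haw : a < w)
    (hwb : w < b) :
    riemannSum Z (insert w S) = riemannSum Z S + (Z a w + Z w b - Z a b) := by
  have hwS := notMem_of_mem_gaps hab haw hwb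
  rw [riemannSum, gaps_insert hab haw hwb, sum_insert, sum_insert, sum_erase_eq_sub hab,
    riemannSum]
  · ring
  · simp [mk_mem_gaps, hwS]
  · simp [mk_mem_gaps, hwS, haw.ne]

theorem gaps_union (hP : IsPartition P r s) (hQ : IsPartition Q s t) :
    gaps (P ∪ Q) = gaps P ∪ gaps Q := by
  obtain ⟨-, hsP, hP⟩ := hP
  obtain ⟨hsQ, -, hQ⟩ := hQ
  ext ⟨x, y⟩
  simp only [mk_mem_gaps, Finset.mem_union]
  grind

theorem disjoint_gaps (hP : IsPartition P r s) (hQ : IsPartition Q s t) :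
    Disjoint (gaps P) (gaps Q) := by
  rw [Finset.disjoint_left]
  rintro ⟨x, y⟩ hP' hQ'
  rw [mk_mem_gaps] at hP' hQ'
  have := (hP.2.2 y hP'.2.1).2
  have := (hQ.2.2 x hQ'.1).1
  linarith [hP'.2.2.1]

theorem riemannSum_union (Z : ℝ → ℝ → ℝ) (hP : IsPartition P r s)
    (hQ : IsPartition Q s t) :
    riemannSum Z (P ∪ Q) = riemannSum Z P + riemannSum Z Q := by
  rw [riemannSum, gaps_union hP hQ, sum_union (disjoint_gaps hP hQ), riemannSum, riemannSum]

theorem riemannSum_pair (Z : ℝ → ℝ → ℝ) (hst : s < t) : riemannSum Z {s, t} = Z s t := by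
  have : gaps {s, t} = {(s, t)} := by
    ext ⟨x, y⟩
    simp only [mk_mem_gaps, Finset.mem_insert, Finset.mem_singleton, forall_eq_or_imp,
      forall_eq, Prod.mk.injEq]
    grind
  simp [riemannSum, this]

theorem IsPartition.exists_mem_gaps (hS : IsPartition S s t) (hw : w ∈ Set.Icc s t)
    (hwS : w ∉ S) :
    ∃ a b, (a, b) ∈ gaps S ∧ a < w ∧ w < b := by
  obtain ⟨hs, ht, hS⟩ := hS
  have hsw : s < w := hw.1.lt_of_ne (by rintro rfl; exact hwS hs)
  have hwt : w < t := hw.2.lt_of_ne (by rintro rfl; exact hwS ht)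
  obtain ⟨a, ha, hamax⟩ :=
    (S.filter (· < w)).exists_max_image id ⟨s, by simpa using ⟨hs, hsw⟩⟩
  obtain ⟨b, hb, hbmin⟩ :=
    (S.filter (w < ·)).exists_min_image id ⟨t, by simpa using ⟨ht, hwt⟩⟩
  simp only [Finset.mem_filter, id] at ha hb hamax hbmin
  refine ⟨a, b, mk_mem_gaps.2 ⟨ha.1, hb.1, ha.2.trans hb.2, fun z hz => ?_⟩, ha.2, hb.2⟩
  rcases lt_trichotomy z w with hzw | rfl | hwz
  · exact Or.inl (hamax z ⟨hz, hzw⟩)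
  · exact absurd hz hwS
  · exact Or.inr (hbmin z ⟨hz, hwz⟩)

theorem IsPartition.insert (hS : IsPartition S s t) (hw : w ∈ Set.Icc s t) :
    IsPartition (insert w S) s t :=
  ⟨mem_insert_of_mem hS.1, mem_insert_of_mem hS.2.1, fun x hx =>
    (Finset.mem_insert.1 hx).elim (· ▸ hw) (hS.2.2 x)⟩

theorem IsPartition.union (hP : IsPartition P r s) (hQ : IsPartition Q s t) :
    IsPartition (P ∪ Q) r t := by
  obtain ⟨hrP, hsP, hP⟩ := hP
  obtain ⟨hsQ, htQ, hQ⟩ := hQ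
  refine ⟨mem_union_left _ hrP, mem_union_right _ htQ, fun x hx => ?_⟩
  have hrs := (hP s hsP).1
  have hst := (hQ s hsQ).2
  rcases Finset.mem_union.1 hx with hx | hx
  · exact ⟨(hP x hx).1, (hP x hx).2.trans hst⟩
  · exact ⟨hrs.trans (hQ x hx).1, (hQ x hx).2⟩

theorem MeshLE.mono (hS : MeshLE S h) {h' : ℝ} (hh : h ≤ h') : MeshLE S h' :=
  fun g hg => (hS g hg).trans hh

theorem MeshLE.insert (hS : IsPartition S s t) (hmesh : MeshLE S h) (hw : w ∈ Set.Icc s t) :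
    MeshLE (insert w S) h := by
  by_cases hwS : w ∈ S
  · rwa [Finset.insert_eq_of_mem hwS]
  obtain ⟨a, b, hab, haw, hwb⟩ := hS.exists_mem_gaps hw hwS
  have := hmesh _ hab
  intro g hg
  rw [gaps_insert hab haw hwb] at hg
  simp only [Finset.mem_insert, mem_erase] at hg
  rcases hg with rfl | rfl | ⟨-, hg⟩
  · dsimp only at this ⊢; linarith
  · dsimp only at this ⊢; linarith
  · exact hmesh g hg

theorem MeshLE.union (hP : IsPartition P r s) (hQ : IsPartition Q s t) (hmP : MeshLE P h)
    (hmQ : MeshLE Q h) : MeshLE (P ∪ Q) h := by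
  intro g hg
  rw [gaps_union hP hQ, Finset.mem_union] at hg
  exact hg.elim (hmP g) (hmQ g)

def DefectBound (Z : ℝ → ℝ → ℝ) (C p q : ℝ) (I : Set ℝ) : Prop :=
  ∀ s ∈ I, ∀ u ∈ I, ∀ t ∈ I, |Z s t - Z s u - Z u t| ≤ C * |t - u| ^ p * |u - s| ^ q

variable {Z : ℝ → ℝ → ℝ} {C p q : ℝ} {I J : Set ℝ}

theorem DefectBound.mono (hZ : DefectBound Z C p q I) (hJ : J ⊆ I) : DefectBound Z C p q J :=
  fun s hs u hu t ht => hZ s (hJ hs) u (hJ hu) t (hJ ht)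

theorem DefectBound.apply_self (hZ : DefectBound Z C p q I) (hp : 0 < p) (hs : s ∈ I) :
    Z s s = 0 := by
  have := hZ s hs s hs s hs
  rw [show Z s s - Z s s - Z s s = -Z s s by ring, abs_neg, sub_self, abs_zero,
    Real.zero_rpow hp.ne', mul_zero, zero_mul] at this
  exact abs_nonpos_iff.1 this

theorem DefectBound.abs_add_swap_le (hZ : DefectBound Z C p q I) (hp : 0 < p) (hq : 0 ≤ q)
    (hs : s ∈ I) (ht : t ∈ I) : |Z s t + Z t s| ≤ C * |t - s| ^ (p + q) := by
  have := hZ s hs t ht s hs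
  rwa [hZ.apply_self hp hs, zero_sub, sub_eq_add_neg, ← neg_add, abs_neg, abs_sub_comm s t,
    mul_assoc, ← Real.rpow_add_of_nonneg (abs_nonneg _) hp.le hq] at this

theorem DefectBound.abs_split_sub_le (hZ : DefectBound Z C p q I) (hC : 0 ≤ C) (hp : 0 ≤ p)
    (hq : 0 ≤ q) (ha : a ∈ I) (hw : w ∈ I) (hb : b ∈ I) (haw : a ≤ w) (hwb : w ≤ b) :
    |Z a w + Z w b - Z a b| ≤ C * (b - a) ^ (p + q) := by
  have := hZ a ha w hw b hb
  rw [show Z a b - Z a w - Z w b = -(Z a w + Z w b - Z a b) by ring, abs_neg,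
    abs_of_nonneg (sub_nonneg.2 hwb), abs_of_nonneg (sub_nonneg.2 haw)] at this
  refine this.trans ?_
  rw [Real.rpow_add_of_nonneg (by linarith) hp hq, ← mul_assoc]
  have hba : 0 ≤ b - a := by linarith
  gcongr

theorem abs_riemannSum_insert_sub_le (hZ : DefectBound Z C p q (Set.Icc s t)) (hC : 0 ≤ C)
    (hp : 0 ≤ p) (hq : 0 ≤ q) (hh : 0 ≤ h) (hS : IsPartition S s t) (hmesh : MeshLE S h)
    (hw : w ∈ Set.Icc s t) :
    |riemannSum Z (insert w S) - riemannSum Z S| ≤ C * h ^ (p + q) := by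
  by_cases hwS : w ∈ S
  · rw [Finset.insert_eq_of_mem hwS, sub_self, abs_zero]
    positivity
  obtain ⟨a, b, hab, haw, hwb⟩ := hS.exists_mem_gaps hw hwS
  obtain ⟨ha, hb, -⟩ := mk_mem_gaps.1 hab
  rw [riemannSum_insert Z hab haw hwb, add_sub_cancel_left]
  calc _ ≤ C * (b - a) ^ (p + q) :=
        hZ.abs_split_sub_le hC hp hq (hS.2.2 a ha) hw (hS.2.2 b hb) haw.le hwb.le
    _ ≤ C * h ^ (p + q) := by
        gcongr
        · linarith
        · exact hmesh _ hab

theorem abs_riemannSum_union_sub_le (hZ : DefectBound Z C p q (Set.Icc s t)) (hC : 0 ≤ C)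
    (hp : 0 ≤ p) (hq : 0 ≤ q) (hh : 0 ≤ h) (hS : IsPartition S s t) (hmesh : MeshLE S h)
    (hW : ∀ w ∈ W, w ∈ Set.Icc s t) :
    |riemannSum Z (S ∪ W) - riemannSum Z S| ≤ W.card * (C * h ^ (p + q)) := by
  induction W using Finset.induction_on generalizing S with
  | empty => simp
  | insert w W hwW ih =>
    have hw := hW w (mem_insert_self w W)
    have hrest := ih (hS.insert hw) (hmesh.insert hS hw) fun x hx => hW x (mem_insert_of_mem hx)
    rw [Finset.union_insert, ← Finset.insert_union, card_insert_of_notMem hwW]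
    calc _ ≤ |riemannSum Z (insert w S ∪ W) - riemannSum Z (insert w S)|
          + |riemannSum Z (insert w S) - riemannSum Z S| := abs_sub_le _ _ _
      _ ≤ W.card * (C * h ^ (p + q)) + C * h ^ (p + q) :=
          add_le_add hrest (abs_riemannSum_insert_sub_le hZ hC hp hq hh hS hmesh hw)
      _ = ((W.card + 1 : ℕ) : ℝ) * (C * h ^ (p + q)) := by push_cast; ring

theorem abs_riemannSum_sub_le (hZ : DefectBound Z C p q (Set.Icc s t)) (hC : 0 ≤ C)
    (hp : 0 ≤ p) (hq : 0 ≤ q) (hh : 0 ≤ h) (hP : IsPartition P s t) (hQ : IsPartition Q s t)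
    (hmP : MeshLE P h) (hmQ : MeshLE Q h) :
    |riemannSum Z P - riemannSum Z Q| ≤ (P.card + Q.card) * (C * h ^ (p + q)) := by
  have hPQ := abs_riemannSum_union_sub_le hZ hC hp hq hh hP hmP hQ.2.2
  have hQP := abs_riemannSum_union_sub_le hZ hC hp hq hh hQ hmQ hP.2.2
  rw [Finset.union_comm] at hQP
  calc _ ≤ |riemannSum Z P - riemannSum Z (P ∪ Q)|
        + |riemannSum Z (P ∪ Q) - riemannSum Z Q| := abs_sub_le _ _ _
    _ ≤ Q.card * (C * h ^ (p + q)) + P.card * (C * h ^ (p + q)) := by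
        rw [abs_sub_comm]; exact add_le_add hPQ hQP
    _ = _ := by ring

noncomputable def dyadic (n : ℕ) (s t : ℝ) : Finset ℝ :=
  (range (2 ^ n + 1)).image fun k : ℕ => s + k * ((t - s) / 2 ^ n)

theorem dyadic_zero (s t : ℝ) : dyadic 0 s t = {s, t} := by
  simp [dyadic, show range 2 = {0, 1} by rfl]

theorem card_dyadic_le (n : ℕ) (s t : ℝ) : (dyadic n s t).card ≤ 2 ^ n + 1 :=
  card_image_le.trans (card_range _).le

theorem isPartition_dyadic (n : ℕ) (hst : s ≤ t) : IsPartition (dyadic n s t) s t := by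
  have hh : 0 ≤ (t - s) / 2 ^ n := by have := sub_nonneg.2 hst; positivity
  refine ⟨mem_image.2 ⟨0, by simp⟩,
    mem_image.2 ⟨2 ^ n, by simp, by push_cast; field_simp; ring⟩, ?_⟩
  simp only [dyadic, mem_image, mem_range]
  rintro _ ⟨k, hk, rfl⟩
  have hk' : (k : ℝ) ≤ 2 ^ n := by exact_mod_cast Nat.lt_succ_iff.1 hk
  refine ⟨by nlinarith, ?_⟩
  calc s + k * ((t - s) / 2 ^ n) ≤ s + 2 ^ n * ((t - s) / 2 ^ n) := by gcongr
    _ = t := by field_simp; ring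

theorem meshLE_dyadic (n : ℕ) (hst : s ≤ t) : MeshLE (dyadic n s t) ((t - s) / 2 ^ n) := by
  set h := (t - s) / 2 ^ n
  have hh : 0 ≤ h := by have := sub_nonneg.2 hst; positivity
  rintro ⟨x, y⟩ hxy
  obtain ⟨hx, hy, hlt, hgap⟩ := mk_mem_gaps.1 hxy
  simp only [dyadic, mem_image, mem_range] at hx hy
  obtain ⟨k, -, rfl⟩ := hx
  obtain ⟨j, hj, rfl⟩ := hy
  by_contra! hfar
  have hkj : ((k + 1 : ℕ) : ℝ) * h < j * h := by push_cast; linarith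
  have hk1 : s + ((k + 1 : ℕ) : ℝ) * h ∈ dyadic n s t := by
    refine mem_image.2 ⟨k + 1, mem_range.2 ?_, rfl⟩
    have : k + 1 < j := by exact_mod_cast lt_of_mul_lt_mul_right hkj hh
    omega
  rcases hgap _ hk1 with h1 | h1
  · push_cast at h1 hkj; nlinarith
  · linarith

theorem two_pow_mul_rpow_div_two_pow {x : ℝ} (hx : 0 ≤ x) (θ : ℝ) (n : ℕ) :
    2 ^ n * (x / 2 ^ n) ^ θ = x ^ θ * ((2 : ℝ) ^ (1 - θ)) ^ n := by
  rw [Real.div_rpow hx (by positivity), ← Real.rpow_natCast, ← Real.rpow_natCast (_ ^ _),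
    ← Real.rpow_mul zero_le_two, ← Real.rpow_mul zero_le_two, mul_div_assoc', div_eq_iff
      (by positivity), mul_assoc, ← Real.rpow_add zero_lt_two]
  ring_nf

theorem two_rpow_one_sub_lt_one {θ : ℝ} (hθ : 1 < θ) : (2 : ℝ) ^ (1 - θ) < 1 :=
  Real.rpow_lt_one_of_one_lt_of_neg one_lt_two (by linarith)

theorem abs_riemannSum_sub_le_geometric (hZ : DefectBound Z C p q (Set.Icc s t)) (hC : 0 ≤ C)
    (hp : 0 ≤ p) (hq : 0 ≤ q) (hst : s ≤ t) {n : ℕ} (hP : IsPartition P s t)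
    (hQ : IsPartition Q s t) (hmP : MeshLE P ((t - s) / 2 ^ n))
    (hmQ : MeshLE Q ((t - s) / 2 ^ n)) {k : ℝ} (hcard : (P.card + Q.card : ℝ) ≤ k * 2 ^ n) :
    |riemannSum Z P - riemannSum Z Q| ≤
      k * C * (t - s) ^ (p + q) * ((2 : ℝ) ^ (1 - (p + q))) ^ n := by
  have hts : 0 ≤ t - s := sub_nonneg.2 hst
  calc _ ≤ (P.card + Q.card) * (C * ((t - s) / 2 ^ n) ^ (p + q)) :=
        abs_riemannSum_sub_le hZ hC hp hq (by positivity) hP hQ hmP hmQ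
    _ ≤ k * 2 ^ n * (C * ((t - s) / 2 ^ n) ^ (p + q)) := by gcongr
    _ = _ := by rw [mul_assoc k, ← mul_assoc (2 ^ n), mul_comm (2 ^ n) C, mul_assoc C,
          two_pow_mul_rpow_div_two_pow hts]; ring

noncomputable def sewingMap (Z : ℝ → ℝ → ℝ) (s t : ℝ) : ℝ :=
  limUnder atTop fun n => riemannSum Z (dyadic n s t)

theorem dist_riemannSum_dyadic_succ_le (hZ : DefectBound Z C p q (Set.Icc s t)) (hC : 0 ≤ C)
    (hp : 0 ≤ p) (hq : 0 ≤ q) (hst : s ≤ t) (n : ℕ) :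
    dist (riemannSum Z (dyadic n s t)) (riemannSum Z (dyadic (n + 1) s t)) ≤
      5 * C * (t - s) ^ (p + q) * ((2 : ℝ) ^ (1 - (p + q))) ^ n := by
  have hmesh : (t - s) / 2 ^ (n + 1) ≤ (t - s) / 2 ^ n := by
    have := sub_nonneg.2 hst
    gcongr
    exacts [one_le_two, n.le_succ]
  rw [Real.dist_eq]
  refine abs_riemannSum_sub_le_geometric hZ hC hp hq hst (isPartition_dyadic n hst)
    (isPartition_dyadic (n + 1) hst) (meshLE_dyadic n hst) ((meshLE_dyadic _ hst).mono hmesh) ?_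
  have h1 : ((dyadic n s t).card : ℝ) ≤ 2 ^ n + 1 := by exact_mod_cast card_dyadic_le n s t
  have h2 : ((dyadic (n + 1) s t).card : ℝ) ≤ 2 ^ (n + 1) + 1 := by
    exact_mod_cast card_dyadic_le (n + 1) s t
  have h3 : (1 : ℝ) ≤ 2 ^ n := one_le_pow₀ one_le_two
  rw [pow_succ] at h2
  linarith

theorem tendsto_riemannSum_dyadic (hZ : DefectBound Z C p q (Set.Icc s t)) (hC : 0 ≤ C)
    (hp : 0 ≤ p) (hq : 0 ≤ q) (hpq : 1 < p + q) (hst : s ≤ t) :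
    Tendsto (fun n => riemannSum Z (dyadic n s t)) atTop (𝓝 (sewingMap Z s t)) :=
  (cauchySeq_of_le_geometric _ _ (two_rpow_one_sub_lt_one hpq)
    (dist_riemannSum_dyadic_succ_le hZ hC hp hq hst)).tendsto_limUnder

theorem abs_sewingMap_sub_le (hZ : DefectBound Z C p q (Set.Icc s t)) (hC : 0 ≤ C)
    (hp : 0 ≤ p) (hq : 0 ≤ q) (hpq : 1 < p + q) (hst : s < t) :
    |sewingMap Z s t - Z s t| ≤
      5 * C / (1 - (2 : ℝ) ^ (1 - (p + q))) * (t - s) ^ (p + q) := by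
  have := dist_le_of_le_geometric_of_tendsto₀ _ _ (two_rpow_one_sub_lt_one hpq)
    (dist_riemannSum_dyadic_succ_le hZ hC hp hq hst.le)
    (tendsto_riemannSum_dyadic hZ hC hp hq hpq hst.le)
  rw [dyadic_zero, riemannSum_pair Z hst, Real.dist_eq, abs_sub_comm] at this
  exact this.trans_eq (by ring)

theorem sewingMap_add (hZ : DefectBound Z C p q (Set.Icc r t)) (hC : 0 ≤ C) (hp : 0 ≤ p)
    (hq : 0 ≤ q) (hpq : 1 < p + q) (hrs : r ≤ s) (hst : s ≤ t) :
    sewingMap Z r s + sewingMap Z s t = sewingMap Z r t := by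
  have hsum : Tendsto (fun n => riemannSum Z (dyadic n r s ∪ dyadic n s t)) atTop
      (𝓝 (sewingMap Z r s + sewingMap Z s t)) := by
    simp only [riemannSum_union Z (isPartition_dyadic _ hrs) (isPartition_dyadic _ hst)]
    exact (tendsto_riemannSum_dyadic (hZ.mono (Set.Icc_subset_Icc_right hst)) hC hp hq hpq
      hrs).add (tendsto_riemannSum_dyadic (hZ.mono (Set.Icc_subset_Icc_left hrs)) hC hp hq hpq hst)
  have hclose : ∀ n, dist (riemannSum Z (dyadic n r s ∪ dyadic n s t))
      (riemannSum Z (dyadic n r t)) ≤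
        6 * C * (t - r) ^ (p + q) * ((2 : ℝ) ^ (1 - (p + q))) ^ n := by
    intro n
    have hmesh : MeshLE (dyadic n r s ∪ dyadic n s t) ((t - r) / 2 ^ n) := by
      refine ((meshLE_dyadic n hrs).mono ?_).union (isPartition_dyadic n hrs)
        (isPartition_dyadic n hst) ((meshLE_dyadic n hst).mono ?_) <;> gcongr
    rw [dist_comm, Real.dist_eq]
    refine abs_riemannSum_sub_le_geometric hZ hC hp hq (hrs.trans hst)
      (isPartition_dyadic n (hrs.trans hst))
      ((isPartition_dyadic n hrs).union (isPartition_dyadic n hst))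
      (meshLE_dyadic n (hrs.trans hst)) hmesh ?_
    have h1 := card_dyadic_le n r s
    have h2 := card_dyadic_le n s t
    have h3 := card_dyadic_le n r t
    have h4 := card_union_le (dyadic n r s) (dyadic n s t)
    have h5 : 1 ≤ 2 ^ n := Nat.one_le_two_pow
    exact_mod_cast (by omega :
      (dyadic n r t).card + (dyadic n r s ∪ dyadic n s t).card ≤ 6 * 2 ^ n)
  have hgeom : Tendsto (fun n : ℕ => 6 * C * (t - r) ^ (p + q) * ((2 : ℝ) ^ (1 - (p + q))) ^ n)
      atTop (𝓝 0) := by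
    simpa using (tendsto_pow_atTop_nhds_zero_of_lt_one (by positivity)
      (two_rpow_one_sub_lt_one hpq)).const_mul (6 * C * (t - r) ^ (p + q))
  exact tendsto_nhds_unique (hsum.congr_dist (squeeze_zero (fun _ => dist_nonneg) hclose hgeom))
    (tendsto_riemannSum_dyadic hZ hC hp hq hpq (hrs.trans hst))

theorem exists_abs_sewingMap_sub_sub_le (hZ : DefectBound Z C p q (Set.Icc a b)) (hC : 0 ≤ C)
    (hp : 0 < p) (hq : 0 ≤ q) (hpq : 1 < p + q) :
    ∃ K, ∀ s ∈ Set.Icc a b, ∀ t ∈ Set.Icc a b,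
      |sewingMap Z a t - sewingMap Z a s - Z s t| ≤ K * |t - s| ^ (p + q) := by
  set K := 5 * C / (1 - (2 : ℝ) ^ (1 - (p + q)))
  have hK : 0 ≤ K := div_nonneg (by positivity) (sub_nonneg.2 (two_rpow_one_sub_lt_one hpq).le)
  have hincr : ∀ {u v}, u ∈ Set.Icc a b → v ∈ Set.Icc a b → u ≤ v →
      sewingMap Z a v - sewingMap Z a u = sewingMap Z u v := fun hu hv huv => by
    rw [← sewingMap_add (hZ.mono (Set.Icc_subset_Icc_right hv.2)) hC hp.le hq hpq hu.1 huv]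
    ring
  have hclose : ∀ {u v}, u ∈ Set.Icc a b → v ∈ Set.Icc a b → u < v →
      |sewingMap Z u v - Z u v| ≤ K * |v - u| ^ (p + q) := fun hu hv huv => by
    rw [abs_of_pos (sub_pos.2 huv)]
    exact abs_sewingMap_sub_le (hZ.mono (Set.Icc_subset_Icc hu.1 hv.2)) hC hp.le hq hpq huv
  refine ⟨K + C, fun s hs t ht => ?_⟩
  have hC' : 0 ≤ C * |t - s| ^ (p + q) := by positivity
  rcases lt_trichotomy s t with hst | rfl | hts
  · rw [hincr hs ht hst.le, add_mul]
    linarith [hclose hs ht hst]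
  · rw [sub_self, zero_sub, abs_neg, hZ.apply_self hp hs, abs_zero]
    positivity
  · rw [← neg_sub (sewingMap Z a s), hincr ht hs hts.le, add_mul, abs_sub_comm t s,
      show -sewingMap Z t s - Z s t = -(sewingMap Z t s - Z t s) - (Z s t + Z t s) by ring]
    have := hZ.abs_add_swap_le hp hq hs ht
    rw [abs_sub_comm t s] at this
    linarith [abs_sub (-(sewingMap Z t s - Z t s)) (Z s t + Z t s),
      abs_neg (sewingMap Z t s - Z t s), hclose ht hs hts]

def RemainderIsLittleO (Y : ℝ → ℝ) (Z : ℝ → ℝ → ℝ) (I : Set ℝ) : Prop :=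
  ∀ ε > (0 : ℝ), ∃ δ > (0 : ℝ), ∀ s ∈ I, ∀ t ∈ I,
    |t - s| ≤ δ → |Y t - Y s - Z s t| ≤ ε * |t - s|

variable {Y Y' : ℝ → ℝ}

theorem remainderIsLittleO_of_le_rpow {θ K : ℝ} (hθ : 1 < θ)
    (h : ∀ s ∈ I, ∀ t ∈ I, |Y t - Y s - Z s t| ≤ K * |t - s| ^ θ) :
    RemainderIsLittleO Y Z I := by
  intro ε hε
  set δ := (ε / (|K| + 1)) ^ (θ - 1)⁻¹
  refine ⟨δ, by positivity, fun s hs t ht hδ => ?_⟩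
  have hx := abs_nonneg (t - s)
  calc |Y t - Y s - Z s t| ≤ K * |t - s| ^ θ := h s hs t ht
    _ = K * |t - s| ^ (θ - 1) * |t - s| := by
        rw [mul_assoc, ← Real.rpow_add_one' hx (by linarith), sub_add_cancel]
    _ ≤ |K| * δ ^ (θ - 1) * |t - s| := by
        gcongr
        exact le_abs_self K
    _ = |K| * (ε / (|K| + 1)) * |t - s| := by
        rw [Real.rpow_inv_rpow (by positivity) (by linarith)]
    _ ≤ ε * |t - s| := by
        gcongr
        rw [mul_div_assoc', div_le_iff₀ (by positivity)]
        nlinarith [abs_nonneg K]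

theorem constant_of_forall_abs_sub_le_mul {f : ℝ → ℝ}
    (h : ∀ ε > (0 : ℝ), ∃ δ > (0 : ℝ), ∀ s ∈ Set.Icc a b, ∀ t ∈ Set.Icc a b,
      |t - s| ≤ δ → |f t - f s| ≤ ε * |t - s|) :
    ∀ x ∈ Set.Icc a b, f x = f a := by
  have hderiv : ∀ x ∈ Set.Icc a b, HasDerivWithinAt f 0 (Set.Icc a b) x := by
    intro x hx
    rw [hasDerivWithinAt_iff_isLittleO]
    refine Asymptotics.IsLittleO.of_bound fun ε hε => ?_
    obtain ⟨δ, hδ, hf⟩ := h ε hε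
    filter_upwards [self_mem_nhdsWithin, nhdsWithin_le_nhds (Metric.closedBall_mem_nhds x hδ)]
      with y hy hyx
    rw [Metric.mem_closedBall, Real.dist_eq] at hyx
    simpa using hf x hx y hy hyx
  refine constant_of_has_deriv_right_zero (fun x hx => (hderiv x hx).continuousWithinAt)
    fun x hx => (hderiv x (Set.Ico_subset_Icc_self hx)).mono_of_mem_nhdsWithin ?_
  exact mem_of_superset (Icc_mem_nhdsGE hx.2) (Set.Icc_subset_Icc_left hx.1)

theorem RemainderIsLittleO.eq_add_const (hY : RemainderIsLittleO Y Z (Set.Icc a b))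
    (hY' : RemainderIsLittleO Y' Z (Set.Icc a b)) :
    ∀ t ∈ Set.Icc a b, Y' t = Y t + (Y' a - Y a) := by
  have hconst := constant_of_forall_abs_sub_le_mul (f := Y' - Y) fun ε hε => by
    obtain ⟨δ, hδ, hR⟩ := hY (ε / 2) (half_pos hε)
    obtain ⟨δ', hδ', hR'⟩ := hY' (ε / 2) (half_pos hε)
    refine ⟨min δ δ', lt_min hδ hδ', fun s hs t ht hst => ?_⟩
    have h1 := hR s hs t ht (hst.trans (min_le_left _ _))
    have h2 := hR' s hs t ht (hst.trans (min_le_right _ _))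
    calc |(Y' - Y) t - (Y' - Y) s|
        = |(Y' t - Y' s - Z s t) - (Y t - Y s - Z s t)| := by simp only [Pi.sub_apply]; ring_nf
      _ ≤ ε / 2 * |t - s| + ε / 2 * |t - s| := (abs_sub _ _).trans (add_le_add h2 h1)
      _ = ε * |t - s| := by ring
  intro t ht
  have := hconst t ht
  simp only [Pi.sub_apply] at this
  linarith

theorem RemainderIsLittleO.abs_sum_sub_le (hY : RemainderIsLittleO Y Z (Set.Icc a b))
    (hs : s ∈ Set.Icc a b) (ht : t ∈ Set.Icc a b) (hst : s < t) :
    ∀ ε > (0 : ℝ), ∃ δ > (0 : ℝ), ∀ (n : ℕ) (c : Fin (n + 1) → ℝ),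
      c 0 = s → c (Fin.last n) = t →
      (∀ i : Fin n, c i.castSucc ≤ c i.succ) →
      (∀ i : Fin n, c i.succ - c i.castSucc ≤ δ) →
      |(∑ i : Fin n, Z (c i.castSucc) (c i.succ)) - (Y t - Y s)| ≤ ε := by
  intro ε hε
  have hts := sub_pos.2 hst
  obtain ⟨δ, hδ, hR⟩ := hY (ε / (t - s)) (by positivity)
  refine ⟨δ, hδ, fun n c hc0 hcn hmono hmesh => ?_⟩
  have hc : ∀ i, c i ∈ Set.Icc a b := fun i => by
    have hm := Fin.monotone_iff_le_succ.2 hmono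
    exact ⟨hs.1.trans (hc0 ▸ hm (Fin.zero_le i)), (hcn ▸ hm (Fin.le_last i)).trans ht.2⟩
  have hstep : ∀ i : Fin n, |Z (c i.castSucc) (c i.succ) - (Y (c i.succ) - Y (c i.castSucc))| ≤
      ε / (t - s) * (c i.succ - c i.castSucc) := fun i => by
    have hd := abs_of_nonneg (sub_nonneg.2 (hmono i))
    have := hR _ (hc i.castSucc) _ (hc i.succ) (hd.trans_le (hmesh i))
    rwa [hd, abs_sub_comm] at this
  have hYc : ∑ i : Fin n, (Y (c i.succ) - Y (c i.castSucc)) = Y t - Y s := by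
    rw [← hc0, ← hcn]; exact Fin.sum_succ_sub_castSucc fun i => Y (c i)
  have hcc : ∑ i : Fin n, (c i.succ - c i.castSucc) = t - s := by
    rw [← hc0, ← hcn]; exact Fin.sum_succ_sub_castSucc c
  calc _ = |∑ i : Fin n, (Z (c i.castSucc) (c i.succ) - (Y (c i.succ) - Y (c i.castSucc)))| := by
        rw [sum_sub_distrib, hYc]
    _ ≤ ∑ i : Fin n, ε / (t - s) * (c i.succ - c i.castSucc) :=
        (abs_sum_le_sum_abs _ _).trans (sum_le_sum fun i _ => hstep i)
    _ = ε := by rw [← mul_sum, hcc, div_mul_cancel₀ _ hts.ne']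

end Sewing

theorem stmt_4_general (T : ℝ) (Zt : ℝ → ℝ → ℝ) (C p q : ℝ)
    (hC : 0 ≤ C) (hp : 0 < p) (hq : 0 < q) (hpq : 1 < p + q)
    (hZ : ∀ s ∈ Set.Icc (0 : ℝ) T, ∀ u ∈ Set.Icc (0 : ℝ) T, ∀ t ∈ Set.Icc (0 : ℝ) T,
      |Zt s t - Zt s u - Zt u t| ≤ C * |t - u| ^ p * |u - s| ^ q) :
    ∃ Y : ℝ → ℝ,
      (∀ ε > (0 : ℝ), ∃ δ > (0 : ℝ), ∀ s ∈ Set.Icc (0 : ℝ) T, ∀ t ∈ Set.Icc (0 : ℝ) T,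
        |t - s| ≤ δ → |Y t - Y s - Zt s t| ≤ ε * |t - s|) ∧
      (∀ Y' : ℝ → ℝ,
        (∀ ε > (0 : ℝ), ∃ δ > (0 : ℝ), ∀ s ∈ Set.Icc (0 : ℝ) T, ∀ t ∈ Set.Icc (0 : ℝ) T,
          |t - s| ≤ δ → |Y' t - Y' s - Zt s t| ≤ ε * |t - s|) →
        ∃ c : ℝ, ∀ t ∈ Set.Icc (0 : ℝ) T, Y' t = Y t + c) ∧
      (∀ s ∈ Set.Icc (0 : ℝ) T, ∀ t ∈ Set.Icc (0 : ℝ) T, s < t →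
        ∀ ε > (0 : ℝ), ∃ δ > (0 : ℝ), ∀ (n : ℕ) (c : Fin (n + 1) → ℝ),
          c 0 = s → c (Fin.last n) = t →
          (∀ i : Fin n, c i.castSucc ≤ c i.succ) →
          (∀ i : Fin n, c i.succ - c i.castSucc ≤ δ) →
          |(∑ i : Fin n, Zt (c i.castSucc) (c i.succ)) - (Y t - Y s)| ≤ ε) := by
  obtain ⟨K, hK⟩ := Sewing.exists_abs_sewingMap_sub_sub_le hZ hC hp hq.le hpq
  have hY : Sewing.RemainderIsLittleO (Sewing.sewingMap Zt 0) Zt (Set.Icc 0 T) :=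
    Sewing.remainderIsLittleO_of_le_rpow hpq hK
  exact ⟨Sewing.sewingMap Zt 0, hY, fun Y' hY' => ⟨_, hY.eq_add_const hY'⟩,
    fun s hs t ht hst => hY.abs_sum_sub_le hs ht hst⟩

theorem stmt_4 (T : ℝ) (hT : 0 < T) (Zt : ℝ → ℝ → ℝ) (C p q : ℝ)
    (hC : 0 ≤ C) (hp : 0 < p) (hq : 0 < q) (hpq : 1 < p + q)
    (hZ : ∀ s ∈ Set.Icc (0 : ℝ) T, ∀ u ∈ Set.Icc (0 : ℝ) T, ∀ t ∈ Set.Icc (0 : ℝ) T,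
      |Zt s t - Zt s u - Zt u t| ≤ C * |t - u| ^ p * |u - s| ^ q) :
    ∃ Y : ℝ → ℝ,
      (∀ ε > (0 : ℝ), ∃ δ > (0 : ℝ), ∀ s ∈ Set.Icc (0 : ℝ) T, ∀ t ∈ Set.Icc (0 : ℝ) T,
        |t - s| ≤ δ → |Y t - Y s - Zt s t| ≤ ε * |t - s|) ∧
      (∀ Y' : ℝ → ℝ,
        (∀ ε > (0 : ℝ), ∃ δ > (0 : ℝ), ∀ s ∈ Set.Icc (0 : ℝ) T, ∀ t ∈ Set.Icc (0 : ℝ) T,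
          |t - s| ≤ δ → |Y' t - Y' s - Zt s t| ≤ ε * |t - s|) →
        ∃ c : ℝ, ∀ t ∈ Set.Icc (0 : ℝ) T, Y' t = Y t + c) ∧
      (∀ s ∈ Set.Icc (0 : ℝ) T, ∀ t ∈ Set.Icc (0 : ℝ) T, s < t →
        ∀ ε > (0 : ℝ), ∃ δ > (0 : ℝ), ∀ (n : ℕ) (c : Fin (n + 1) → ℝ),
          c 0 = s → c (Fin.last n) = t →
          (∀ i : Fin n, c i.castSucc ≤ c i.succ) →
          (∀ i : Fin n, c i.succ - c i.castSucc ≤ δ) →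
          |(∑ i : Fin n, Zt (c i.castSucc) (c i.succ)) - (Y t - Y s)| ≤ ε) :=
  stmt_4_general T Zt C p q hC hp hq hpq hZ
end
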